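/- arXiv:1006.4283 — 2 statements merged into one kernel-verified Lean document; each statement's English description precedes it below -/
import Mathlib

section
/- Let X(t) be standard one-dimensional Brownian motion, O = (-∞,1), 0 < α < 1/2, G(x) = min(e^x, e), H = f = 0, and w(x) = sup_τ E^x[1_{τ<τ_O} e^{-ατ} G(X(τ))]. Then: (1) for x < 1 and t ≥ 0, E^x[e^{-αt} 1_{X(t)<1} e^{X(t)}] = e^{(1/2-α)t + x} Φ((1-x-t)/√t), where Φ is the standard normal cdf; (2) w(x) ≥ e^{(1/2-α)t + x} Φ((1-x-t)/√t) for all t ≥ 0 and x < 1; (3) w(x) > G(x) = e^x for all x < 1. -/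
open MeasureTheory Set Filter Topology ENNReal

noncomputable section

/-- A (Markov) process: a family of laws `P x` on a path space `Ω` together with
the coordinate process `X`. -/
structure MarkovProcess (E : Type) [MeasurableSpace E]
    (Ω : Type) [MeasurableSpace Ω] where
  P : E → Measure Ω
  isProb : ∀ x, IsProbabilityMeasure (P x)
  X : ℝ → Ω → E
  meas_X : ∀ t : ℝ, Measurable (X t)
  start : ∀ x : E, ∀ᵐ ω ∂ P x, X 0 ω = x

namespace MarkovProcess

variable {E : Type} [MeasurableSpace E] {Ω : Type} [MeasurableSpace Ω]

/-- First exit time from `O` (with value `∞` if the process never leaves `O`). -/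
def exitTime (M : MarkovProcess E Ω) (O : Set E) (ω : Ω) : ℝ≥0∞ :=
  sInf ((fun u : ℝ => ENNReal.ofReal u) '' {u : ℝ | 0 ≤ u ∧ M.X u ω ∉ O})

/-- The natural filtration of the process. -/
def natFiltration (M : MarkovProcess E Ω) : Filtration ℝ (inferInstance : MeasurableSpace Ω) where
  seq t := ⨆ s ∈ Set.Iic t, MeasurableSpace.comap (M.X s) inferInstance
  mono' := by
    intro i j hij
    exact iSup₂_le fun s hs => le_iSup₂_of_le s (hs.trans hij) le_rfl
  le' := by
    intro t
    exact iSup₂_le fun s _ => (M.meas_X s).comap_le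

/-- Stopping times (with values in `ℝ≥0∞`) w.r.t. the natural filtration. -/
def IsStopTime (M : MarkovProcess E Ω) (τ : Ω → ℝ≥0∞) : Prop :=
  ∀ t : ℝ, MeasurableSet[M.natFiltration t] {ω | τ ω ≤ ENNReal.ofReal t}

/-- `∫_0^T e^{-α u} g(s+u, X(u)) du` along the path `ω` (`T` may be `∞`). -/
def runIntegral (M : MarkovProcess E Ω) (α : ℝ) (g : ℝ → E → ℝ) (s : ℝ)
    (T : ℝ≥0∞) (ω : Ω) : ℝ :=
  ∫ u in {u : ℝ | 0 ≤ u ∧ ENNReal.ofReal u < T}, Real.exp (-α * u) * g (s + u) (M.X u ω)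

/-- Discounted payoff `e^{-α T} h(s+T, X(T))`, read as `0` when `T = ∞`. -/
def payoffAt (M : MarkovProcess E Ω) (α : ℝ) (h : ℝ → E → ℝ) (s : ℝ)
    (T : ℝ≥0∞) (ω : Ω) : ℝ :=
  if T ≠ ∞ then Real.exp (-α * T.toReal) * h (s + T.toReal) (M.X T.toReal ω) else 0

/-- The payoff functional
`J(s,x,τ) = E^x[∫_0^{τ∧τ_O} e^{-αu} f(s+u,X(u)) du + 1_{τ<τ_O} e^{-ατ} G(s+τ,X(τ))
  + 1_{τ≥τ_O} e^{-ατ_O} H(s+τ_O,X(τ_O))]`. -/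
def J (M : MarkovProcess E Ω) (O : Set E) (α : ℝ) (f G H : ℝ → E → ℝ)
    (s : ℝ) (x : E) (τ : Ω → ℝ≥0∞) : ℝ :=
  ∫ ω,
    (M.runIntegral α f s (min (τ ω) (M.exitTime O ω)) ω
      + Set.indicator {ω | τ ω < M.exitTime O ω}
          (fun ω => M.payoffAt α G s (τ ω) ω) ω
      + Set.indicator {ω | M.exitTime O ω ≤ τ ω}
          (fun ω => M.payoffAt α H s (M.exitTime O ω) ω) ω) ∂ M.P x

/-- The value function `w(s,x) = sup_τ J(s,x,τ)`, supremum over all stopping times. -/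
def value (M : MarkovProcess E Ω) (O : Set E) (α : ℝ) (f G H : ℝ → E → ℝ)
    (s : ℝ) (x : E) : ℝ :=
  ⨆ τ : {τ : Ω → ℝ≥0∞ // M.IsStopTime τ}, M.J O α f G H s x τ.1

/-- The penalized equation (for `s` in `[0,∞)`):
`w(s,x) = E^x[∫_0^{τ_O} e^{-αu}(f + β (G - w)^+)(s+u,X(u))du + e^{-ατ_O} H(s+τ_O,X(τ_O))]`. -/
def PenEq (M : MarkovProcess E Ω) (O : Set E) (α β : ℝ) (f G H : ℝ → E → ℝ)
    (w : ℝ → E → ℝ) : Prop :=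
  ∀ s : ℝ, 0 ≤ s → ∀ x : E,
    w s x = ∫ ω,
      (M.runIntegral α (fun u y => f u y + β * max (G u y - w u y) 0) s
          (M.exitTime O ω) ω
        + M.payoffAt α H s (M.exitTime O ω) ω) ∂ M.P x

/-- `∫_0^T e^{-αu - ∫_0^u b(t)dt} (g(s+u,X(u)) + b(u) z(s+u,X(u))) du` along the path `ω`. -/
def runIntegralB (M : MarkovProcess E Ω) (α : ℝ) (b : ℝ → Ω → ℝ) (g z : ℝ → E → ℝ)
    (s : ℝ) (T : ℝ≥0∞) (ω : Ω) : ℝ :=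
  ∫ u in {u : ℝ | 0 ≤ u ∧ ENNReal.ofReal u < T},
    Real.exp (-α * u - ∫ t in Set.Ioc (0 : ℝ) u, b t ω) *
      (g (s + u) (M.X u ω) + b u ω * z (s + u) (M.X u ω))

/-- Discounted payoff `e^{-αT - ∫_0^T b(t)dt} h(s+T, X(T))`, read as `0` when `T = ∞`. -/
def payoffAtB (M : MarkovProcess E Ω) (α : ℝ) (b : ℝ → Ω → ℝ) (h : ℝ → E → ℝ)
    (s : ℝ) (T : ℝ≥0∞) (ω : Ω) : ℝ :=
  if T ≠ ∞ then
    Real.exp (-α * T.toReal - ∫ t in Set.Ioc (0 : ℝ) T.toReal, b t ω) *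
      h (s + T.toReal) (M.X T.toReal ω)
  else 0

/-- Boundedness (on `[0,∞) × E`) of a payoff function. -/
def Bdd (g : ℝ → E → ℝ) : Prop := ∃ C : ℝ, ∀ s x, 0 ≤ s → |g s x| ≤ C

/-- The (weak, semigroup form of the) Markov property. -/
def IsMarkov (M : MarkovProcess E Ω) : Prop :=
  ∀ h : E → ℝ, Measurable h → (∃ C, ∀ x, |h x| ≤ C) →
    ∀ (x : E) (s t : ℝ), 0 ≤ s → 0 ≤ t →
      ∫ ω, h (M.X (s + t) ω) ∂ M.P x
        = ∫ ω, (∫ ω', h (M.X t ω') ∂ M.P (M.X s ω)) ∂ M.P x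

/-- Assumption (A1): the stopped semigroup `P_t^{τ_O} h(x) = E^x[1_{t<τ_O} h(X(t))]`
maps continuous bounded functions to continuous (bounded) functions. -/
def A1 [TopologicalSpace E] (M : MarkovProcess E Ω) (O : Set E) : Prop :=
  ∀ t : ℝ, 0 < t → ∀ h : E → ℝ, Continuous h → (∃ C, ∀ x, |h x| ≤ C) →
    Continuous fun x =>
      ∫ ω, Set.indicator {ω | ENNReal.ofReal t < M.exitTime O ω}
        (fun ω => h (M.X t ω)) ω ∂ M.P x

/-- The weak Feller property: the semigroup preserves `C₀(E)`. -/
def WeakFeller [TopologicalSpace E] (M : MarkovProcess E Ω) : Prop :=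
  ∀ t : ℝ, 0 ≤ t → ∀ h : E → ℝ, Continuous h → Tendsto h (cocompact E) (𝓝 0) →
    Continuous (fun x => ∫ ω, h (M.X t ω) ∂ M.P x) ∧
      Tendsto (fun x => ∫ ω, h (M.X t ω) ∂ M.P x) (cocompact E) (𝓝 0)

/-- The strong Feller property (A3). -/
def StrongFeller [TopologicalSpace E] (M : MarkovProcess E Ω) : Prop :=
  ∀ t : ℝ, 0 < t → ∀ h : E → ℝ, Measurable h → (∃ C, ∀ x, |h x| ≤ C) →
    Continuous fun x => ∫ ω, h (M.X t ω) ∂ M.P x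

end MarkovProcess

/-!
Under `P x` the law of `X t` is `N(x, t)`, and `e^y N(x, t)(dy) = e^{x + t/2} N(x + t, t)(dy)`,
which gives the formula (1).

For (2), stop at `τ_n = (τ_{c_n} ∧ t) ∨ ε_n`, where `τ_c` is the first passage of the path to a
level `c`, with `c_n ↑ 1` and `ε_n ↓ 0`. Since `c_n < 1`, the path is stopped before it leaves
`O = (-∞, 1)`, and for large `n` the discounted reward dominates `e^{-αt} 1_{X t < 1} e^{X t}`: if
the level is reached before `t` the reward is at least `e^{-αt} e^{c_n}`, otherwise it is
`e^{-αt} e^{X t}`. Dominated convergence, applied to the minimum of the reward and the target,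
turns this pathwise eventual domination into (2).

For (3), the Chernoff bound `1 - Φ(z) ≤ e^{-z²/2}` makes `1 - Φ((1 - x - t) / √t) = o(t)` as
`t → 0`, while `e^{(1/2 - α) t} ≥ 1 + (1/2 - α) t`; so the lower bound of (2) exceeds `e^x` for
small `t`.
-/

open ProbabilityTheory
open scoped NNReal

open Real in
theorem gaussianPDFReal_mul_exp (m : ℝ) {v : ℝ≥0} (hv : v ≠ 0) (y : ℝ) :
    gaussianPDFReal m v y * exp y = exp (m + v / 2) * gaussianPDFReal (m + v) v y := by
  have hv' : (v : ℝ) ≠ 0 := by exact_mod_cast hv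
  simp only [gaussianPDFReal]
  rw [mul_left_comm, mul_assoc, ← exp_add, ← exp_add]
  congr 2
  field_simp
  ring

open Real in
theorem setIntegral_exp_gaussianReal (m : ℝ) {v : ℝ≥0} (hv : v ≠ 0) {s : Set ℝ}
    (hs : MeasurableSet s) :
    ∫ y in s, exp y ∂gaussianReal m v = exp (m + v / 2) * (gaussianReal (m + v) v).real s := by
  rw [← integral_indicator hs, integral_gaussianReal_eq_integral_smul hv, measureReal_def,
    gaussianReal_apply_eq_integral _ hv,
    toReal_ofReal (setIntegral_nonneg hs fun y _ => gaussianPDFReal_nonneg _ _ _),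
    ← integral_const_mul, ← integral_indicator hs]
  congr 1 with y
  by_cases hy : y ∈ s <;> simp [hy, gaussianPDFReal_mul_exp m hv]

theorem gaussianReal_real_Iio_eq_Iic (m : ℝ) {v : ℝ≥0} (hv : v ≠ 0) (a : ℝ) :
    (gaussianReal m v).real (Iio a) = (gaussianReal m v).real (Iic a) :=
  measureReal_congr (Iio_ae_eq_Iic' (gaussianReal_absolutelyContinuous m hv Real.volume_singleton))

theorem gaussianReal_real_Iic_eq_cdf (m : ℝ) {v : ℝ≥0} (hv : v ≠ 0) (a : ℝ) :
    (gaussianReal m v).real (Iic a) = cdf (gaussianReal 0 1) ((a - m) / √v) := by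
  have hσ : 0 < √(v : ℝ) := Real.sqrt_pos.2 (by positivity)
  have hmap : (gaussianReal 0 1).map (fun z => √v * z + m) = gaussianReal m v := by
    rw [← Function.comp_def (· + m) (√v * ·), ← Measure.map_map (by fun_prop) (by fun_prop),
      gaussianReal_map_const_mul, gaussianReal_map_add_const]
    congr 1
    · ring
    · ext; simp
  have hpre : (fun z => √v * z + m) ⁻¹' Iic a = Iic ((a - m) / √v) := by
    ext z
    simp [le_div_iff₀ hσ, mul_comm, le_sub_iff_add_le]
  rw [← hmap, map_measureReal_apply (by fun_prop) measurableSet_Iic, hpre, cdf_eq_real]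

theorem one_sub_exp_le_cdf_gaussianReal {z : ℝ} (hz : 0 ≤ z) :
    1 - Real.exp (-(z ^ 2 / 2)) ≤ cdf (gaussianReal 0 1) z := by
  have hchernoff : (gaussianReal 0 1).real (Ici z) ≤ Real.exp (-(z ^ 2 / 2)) := by
    refine (measure_ge_le_exp_mul_mgf (X := id) z hz
      (integrable_exp_mul_gaussianReal z)).trans_eq ?_
    rw [mgf_id_gaussianReal, ← Real.exp_add]
    congr 1
    push_cast
    ring
  have htail : (gaussianReal 0 1).real (Ioi z) ≤ (gaussianReal 0 1).real (Ici z) :=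
    measureReal_mono Ioi_subset_Ici_self
  rw [cdf_eq_real, ← compl_Ioi, probReal_compl_eq_one_sub measurableSet_Ioi]
  linarith

theorem exists_one_lt_exp_mul_cdf_gaussianReal {c d : ℝ} (hc : 0 < c) (hd : 0 < d) :
    ∃ t > 0, 1 < Real.exp (c * t) * cdf (gaussianReal 0 1) ((d - t) / √t) := by
  -- `t ≤ d / 2` gives `z² ≥ d² / (4t)`, whence `e^{-z²/2} ≤ 128 t² / d⁴ ≤ c t / 4`
  set t := min (d / 2) (min (1 / c) (c * d ^ 4 / 512))
  have ht : 0 < t := by positivity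
  have htd : t ≤ d / 2 := min_le_left _ _
  have htc : c * t ≤ 1 := by
    have : t ≤ 1 / c := (min_le_right _ _).trans (min_le_left _ _)
    rwa [le_div_iff₀ hc, mul_comm] at this
  have htc' : 512 * t ≤ c * d ^ 4 := by
    have : t ≤ c * d ^ 4 / 512 := (min_le_right _ _).trans (min_le_right _ _)
    linarith
  set z := (d - t) / √t
  have hz : 0 ≤ z := div_nonneg (by linarith) (Real.sqrt_nonneg t)
  set y := z ^ 2 / 2
  have hy0 : 0 ≤ y := by positivity
  have hy : d ^ 2 ≤ 8 * t * y := by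
    have hz2 : z ^ 2 * t = (d - t) ^ 2 := by
      rw [div_pow, Real.sq_sqrt ht.le, div_mul_cancel₀ _ ht.ne']
    simp only [y]
    nlinarith
  have htail : Real.exp (-y) < c * t / 2 := by
    have hexp : y ^ 2 / 2 ≤ Real.exp y := by
      linarith [Real.quadratic_le_exp_of_nonneg hy0]
    have hy2 : Real.exp (-y) * y ^ 2 ≤ 2 := by
      have := mul_le_mul_of_nonneg_left hexp (Real.exp_pos (-y)).le
      rw [← Real.exp_add, neg_add_cancel, Real.exp_zero] at this
      linarith
    have hd4 : d ^ 4 ≤ (8 * t * y) ^ 2 := by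
      rw [show d ^ 4 = (d ^ 2) ^ 2 by ring]
      exact pow_le_pow_left₀ (by positivity) hy 2
    have h2 : Real.exp (-y) * d ^ 4 ≤ 128 * t ^ 2 := by
      nlinarith [Real.exp_pos (-y)]
    nlinarith [show 0 < d ^ 4 by positivity]
  refine ⟨t, ht, ?_⟩
  calc 1 < (c * t + 1) * (1 - Real.exp (-y)) := by nlinarith [Real.exp_pos (-y)]
    _ ≤ Real.exp (c * t) * cdf (gaussianReal 0 1) z :=
      mul_le_mul (Real.add_one_le_exp _) (one_sub_exp_le_cdf_gaussianReal hz) (by linarith)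
        (Real.exp_nonneg _)

theorem integral_indicator_Iio_exp_gaussianReal (m : ℝ) {v : ℝ≥0} (hv : v ≠ 0) (a : ℝ) :
    ∫ y, (Iio a).indicator Real.exp y ∂gaussianReal m v
      = Real.exp (m + v / 2) * cdf (gaussianReal 0 1) ((a - m - v) / √v) := by
  rw [integral_indicator measurableSet_Iio, setIntegral_exp_gaussianReal m hv measurableSet_Iio,
    gaussianReal_real_Iio_eq_Iic _ hv, gaussianReal_real_Iic_eq_cdf _ hv, sub_sub]

theorem integral_le_of_ae_eventually_le {α : Type*} [MeasurableSpace α] {μ : Measure α}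
    [IsFiniteMeasure μ] {f : ℕ → α → ℝ} {g : α → ℝ} {C v : ℝ}
    (hf : ∀ n, AEStronglyMeasurable (f n) μ) (hg : AEStronglyMeasurable g μ)
    (hfC : ∀ n, ∀ᵐ a ∂μ, ‖f n a‖ ≤ C) (hgC : ∀ᵐ a ∂μ, ‖g a‖ ≤ C)
    (hfg : ∀ᵐ a ∂μ, ∀ᶠ n in atTop, g a ≤ f n a) (hv : ∀ n, ∫ a, f n a ∂μ ≤ v) :
    ∫ a, g a ∂μ ≤ v := by
  have hfi n : Integrable (f n) μ := (integrable_const C).mono' (hf n) (hfC n)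
  have hgi : Integrable g μ := (integrable_const C).mono' hg hgC
  -- `min (f n) g` is eventually equal to `g`, so dominated convergence applies to it
  have hlim : Tendsto (fun n => ∫ a, min (f n a) (g a) ∂μ) atTop (𝓝 (∫ a, g a ∂μ)) := by
    refine tendsto_integral_of_dominated_convergence (fun _ => C) (fun n => (hf n).inf hg)
      (integrable_const C) (fun n => ?_) ?_
    · filter_upwards [hfC n, hgC] with a hfa hga
      exact (abs_min_le_max_abs_abs).trans (max_le hfa hga)
    · filter_upwards [hfg] with a ha
      exact tendsto_const_nhds.congr' (ha.mono fun n hn => (min_eq_right hn).symm)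
  refine le_of_tendsto' hlim fun n => (integral_mono ((hfi n).inf hgi) (hfi n) ?_).trans (hv n)
  exact fun a => min_le_left _ _

theorem exists_Icc_le_iff_forall_exists_rat {f : ℝ → ℝ} (hf : Continuous f) (t c : ℝ) :
    (∃ u ∈ Icc 0 t, c ≤ f u) ↔ ∀ n : ℕ, ∃ q : ℚ, (q : ℝ) ∈ Icc 0 t ∧ c - 1 / (n + 1) < f q := by
  constructor
  · rintro ⟨u, hu, hcu⟩ n
    obtain ⟨δ, hδ, hball⟩ := Metric.isOpen_iff.1
      (isOpen_lt continuous_const hf) u (show c - 1 / (n + 1) < f u by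
        have : (0 : ℝ) < 1 / (n + 1) := by positivity
        linarith)
    rcases hu.1.eq_or_lt with rfl | hu0
    · exact ⟨0, by simpa using hu, by simpa using hball (Metric.mem_ball_self hδ)⟩
    obtain ⟨q, hq1, hq2⟩ := exists_rat_btwn (sub_lt_self u (lt_min hδ hu0))
    have hqu : dist (q : ℝ) u < δ := by
      rw [Real.dist_eq, abs_lt]
      constructor <;> linarith [min_le_left δ u]
    exact ⟨q, ⟨by linarith [min_le_right δ u], by linarith [hu.2]⟩, hball hqu⟩
  · intro h
    by_contra! hlt
    obtain ⟨q₀, hq₀, -⟩ := h 0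
    obtain ⟨u₀, hu₀, hmax⟩ := isCompact_Icc.exists_isMaxOn ⟨_, hq₀⟩ hf.continuousOn
    obtain ⟨n, hn⟩ := exists_nat_one_div_lt (sub_pos.2 (hlt u₀ hu₀))
    obtain ⟨q, hq, hcq⟩ := h n
    linarith [isMaxOn_iff.1 hmax _ hq]

theorem indicator_Iio_exp_le_min (a y : ℝ) :
    (Iio a).indicator Real.exp y ≤ min (Real.exp y) (Real.exp a) := by
  by_cases hy : y < a
  · simp [hy, hy.le]
  · simp [hy, Real.exp_nonneg]

theorem measurable_of_measurableSet_le_ofReal {Ω : Type*} [MeasurableSpace Ω] {f : Ω → ℝ≥0∞}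
    (hf : ∀ t, 0 ≤ t → MeasurableSet {ω | f ω ≤ ENNReal.ofReal t}) : Measurable f := by
  refine measurable_of_Iic fun a => ?_
  rcases eq_or_ne a ∞ with rfl | ha
  · simp
  · have := hf a.toReal ENNReal.toReal_nonneg
    rwa [ENNReal.ofReal_toReal ha] at this

namespace MarkovProcess

section GeneralState

variable {E : Type} [MeasurableSpace E] {Ω : Type} [MeasurableSpace Ω] {M : MarkovProcess E Ω}
  {O O' : Set E} {ω : Ω}

theorem exitTime_mono (h : O ⊆ O') : M.exitTime O ω ≤ M.exitTime O' ω :=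
  sInf_le_sInf (image_mono fun _ hu => ⟨hu.1, fun h' => hu.2 (h h')⟩)

theorem exitTime_le_ofReal {u : ℝ} (hu : 0 ≤ u) (hX : M.X u ω ∉ O) :
    M.exitTime O ω ≤ ENNReal.ofReal u :=
  sInf_le ⟨u, ⟨hu, hX⟩, rfl⟩

theorem measurable_X_natFiltration {s t : ℝ} (hst : s ≤ t) :
    Measurable[M.natFiltration t] (M.X s) :=
  Measurable.of_comap_le
    (le_iSup₂ (f := fun s (_ : s ∈ Iic t) => MeasurableSpace.comap (M.X s) inferInstance) s hst)

theorem isStopTime_max_min {τ : Ω → ℝ≥0∞}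
    (hτ : ∀ t, 0 ≤ t → MeasurableSet[M.natFiltration t] {ω | τ ω ≤ ENNReal.ofReal t})
    (T : ℝ≥0∞) {ε : ℝ} (hε : 0 < ε) :
    M.IsStopTime fun ω => max (min (τ ω) T) (ENNReal.ofReal ε) := by
  intro t
  rcases lt_or_ge t ε with htε | hεt
  · convert @MeasurableSet.empty _ (M.natFiltration t)
    ext ω
    simpa using fun _ => (ENNReal.ofReal_lt_ofReal_iff hε).2 htε
  · have hset : {ω | max (min (τ ω) T) (ENNReal.ofReal ε) ≤ ENNReal.ofReal t}
        = {ω | τ ω ≤ ENNReal.ofReal t} ∪ {_ω | T ≤ ENNReal.ofReal t} := by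
      ext ω
      simp [ENNReal.ofReal_le_ofReal hεt]
    rw [hset]
    exact (hτ t (hε.le.trans hεt)).union (MeasurableSet.const _)

theorem payoffAt_ofReal (α : ℝ) (h : ℝ → E → ℝ) (s : ℝ) {r : ℝ} (hr : 0 ≤ r) (ω : Ω) :
    M.payoffAt α h s (ENNReal.ofReal r) ω = Real.exp (-α * r) * h (s + r) (M.X r ω) := by
  simp [payoffAt, ENNReal.toReal_ofReal hr]

theorem abs_payoffAt_le {α C : ℝ} (hα : 0 ≤ α) {h : ℝ → E → ℝ} (hC : ∀ s y, |h s y| ≤ C)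
    (s : ℝ) (T : ℝ≥0∞) (ω : Ω) : |M.payoffAt α h s T ω| ≤ C := by
  unfold payoffAt
  split_ifs
  · rw [abs_mul, Real.abs_exp]
    refine (mul_le_of_le_one_left (abs_nonneg _) (Real.exp_le_one_iff.2 ?_)).trans (hC _ _)
    nlinarith [ENNReal.toReal_nonneg (a := T)]
  · simpa using (abs_nonneg _).trans (hC 0 (M.X 0 ω))

theorem J_zero_zero (O : Set E) (α : ℝ) (G : ℝ → E → ℝ) (s : ℝ) (x : E) (τ : Ω → ℝ≥0∞) :
    M.J O α (fun _ _ => 0) G (fun _ _ => 0) s x τ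
      = ∫ ω, {ω | τ ω < M.exitTime O ω}.indicator (fun ω => M.payoffAt α G s (τ ω) ω) ω ∂M.P x := by
  simp [J, runIntegral, payoffAt]

theorem J_zero_zero_le_value {O : Set E} {α C : ℝ} (hα : 0 ≤ α) {G : ℝ → E → ℝ}
    (hC : ∀ s y, |G s y| ≤ C) (s : ℝ) (x : E) {τ : Ω → ℝ≥0∞} (hτ : M.IsStopTime τ) :
    M.J O α (fun _ _ => 0) G (fun _ _ => 0) s x τ
      ≤ M.value O α (fun _ _ => 0) G (fun _ _ => 0) s x := by
  have := M.isProb x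
  refine le_ciSup (f := fun σ : {σ // M.IsStopTime σ} =>
    M.J O α (fun _ _ => 0) G (fun _ _ => 0) s x σ.1) ⟨C, ?_⟩ ⟨τ, hτ⟩
  rintro _ ⟨σ, rfl⟩
  dsimp only
  rw [J_zero_zero]
  refine (Real.le_norm_self _).trans ((norm_integral_le_of_norm_le_const (C := C) ?_).trans_eq ?_)
  · exact ae_of_all _ fun ω => (norm_indicator_le_norm_self _ _).trans (abs_payoffAt_le hα hC _ _ _)
  · simp

variable [TopologicalSpace E]

theorem exists_exitTime_eq_ofReal (hω : Continuous fun u => M.X u ω) (hO : IsOpen O)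
    (h : M.exitTime O ω ≠ ∞) :
    ∃ r, 0 ≤ r ∧ M.X r ω ∉ O ∧ M.exitTime O ω = ENNReal.ofReal r := by
  set S := {u : ℝ | 0 ≤ u ∧ M.X u ω ∉ O}
  have hS : S.Nonempty := by
    by_contra hS
    refine h ?_
    change sInf (_ '' S) = ∞
    rw [not_nonempty_iff_eq_empty.1 hS, image_empty, sInf_empty]
  have hSbdd : BddBelow S := ⟨0, fun u hu => hu.1⟩
  have hr : sInf S ∈ S :=
    ((isClosed_le continuous_const continuous_id).inter
      (hO.isClosed_compl.preimage hω)).csInf_mem hS hSbdd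
  refine ⟨sInf S, hr.1, hr.2, le_antisymm (exitTime_le_ofReal hr.1 hr.2) ?_⟩
  exact le_sInf fun _ ⟨u, hu, hue⟩ => hue ▸ ENNReal.ofReal_le_ofReal (csInf_le hSbdd hu)

theorem exitTime_le_ofReal_iff (hω : Continuous fun u => M.X u ω) (hO : IsOpen O) {t : ℝ}
    (ht : 0 ≤ t) : M.exitTime O ω ≤ ENNReal.ofReal t ↔ ∃ u ∈ Icc 0 t, M.X u ω ∉ O := by
  refine ⟨fun h => ?_, fun ⟨u, hu, hX⟩ =>
    (exitTime_le_ofReal hu.1 hX).trans (ENNReal.ofReal_le_ofReal hu.2)⟩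
  obtain ⟨r, hr0, hX, hr⟩ := exists_exitTime_eq_ofReal hω hO (ne_top_of_le_ne_top ofReal_ne_top h)
  exact ⟨r, ⟨hr0, (ENNReal.ofReal_le_ofReal_iff ht).1 (hr ▸ h)⟩, hX⟩

theorem exitTime_pos (hω : Continuous fun u => M.X u ω) (hO : IsOpen O) (h0 : M.X 0 ω ∈ O) :
    0 < M.exitTime O ω := by
  refine pos_iff_ne_zero.2 fun h => ?_
  obtain ⟨r, hr0, hX, hr⟩ := exists_exitTime_eq_ofReal hω hO (h ▸ zero_ne_top)
  have : r = 0 := le_antisymm (ENNReal.ofReal_eq_zero.1 (hr ▸ h)) hr0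
  exact hX (this ▸ h0)

end GeneralState

section RealPaths

variable {Ω : Type} [MeasurableSpace Ω] {M : MarkovProcess ℝ Ω} {ω : Ω}

theorem exitTime_Iio_lt_exitTime_Iio (hω : Continuous fun u => M.X u ω) {c c' : ℝ}
    (h0 : M.X 0 ω < c) (hcc' : c < c') (h : M.exitTime (Iio c') ω ≠ ∞) :
    M.exitTime (Iio c) ω < M.exitTime (Iio c') ω := by
  obtain ⟨r, hr0, hXr, hr⟩ := exists_exitTime_eq_ofReal hω isOpen_Iio h
  have hXr : c' ≤ M.X r ω := not_lt.1 hXr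
  obtain ⟨u, hu, hXu⟩ := intermediate_value_Icc hr0 hω.continuousOn ⟨h0.le, by linarith⟩
  have hur : u < r := hu.2.lt_of_ne (by rintro rfl; linarith)
  rw [hr]
  exact (exitTime_le_ofReal hu.1 (by simp [hXu])).trans_lt
    ((ENNReal.ofReal_lt_ofReal_iff (hu.1.trans_lt hur)).2 hur)

theorem measurableSet_exitTime_Iio_le (hpath : ∀ ω : Ω, Continuous fun u => M.X u ω) (c : ℝ)
    {t : ℝ} (ht : 0 ≤ t) :
    MeasurableSet[M.natFiltration t] {ω | M.exitTime (Iio c) ω ≤ ENNReal.ofReal t} := by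
  have hset : {ω | M.exitTime (Iio c) ω ≤ ENNReal.ofReal t}
      = ⋂ n : ℕ, ⋃ q : {q : ℚ // (q : ℝ) ∈ Icc 0 t}, M.X q ⁻¹' Ioi (c - 1 / (n + 1)) := by
    ext ω
    simp only [mem_ofPred_eq, exitTime_le_ofReal_iff (hpath ω) isOpen_Iio ht, mem_Iio, not_lt,
      exists_Icc_le_iff_forall_exists_rat (hpath ω), mem_iInter, mem_iUnion, mem_preimage,
      mem_Ioi, Subtype.exists, exists_prop]
  rw [hset]
  exact .iInter fun n => .iUnion fun q => measurable_X_natFiltration q.2.2 measurableSet_Ioi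

theorem measurable_exitTime_Iio (hpath : ∀ ω : Ω, Continuous fun u => M.X u ω) (c : ℝ) :
    Measurable (M.exitTime (Iio c)) :=
  measurable_of_measurableSet_le_ofReal fun _ ht =>
    M.natFiltration.le _ _ (measurableSet_exitTime_Iio_le hpath c ht)

theorem measurable_X_comp (hpath : ∀ ω : Ω, Continuous fun u => M.X u ω) {r : Ω → ℝ}
    (hr : Measurable r) : Measurable fun ω => M.X (r ω) ω :=
  (measurable_uncurry_of_continuous_of_measurable hpath M.meas_X).comp (hr.prodMk measurable_id)

theorem le_indicator_payoffAt_min_exitTime (hω : Continuous fun u => M.X u ω)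
    {α t : ℝ} (hα : 0 ≤ α) (ht : 0 ≤ t) {c : ℝ} (h0 : M.X 0 ω < c) (hc : c < 1)
    (hcX : M.X t ω < 1 → M.X t ω < c) :
    Real.exp (-α * t) * {ω | M.X t ω < 1}.indicator (fun ω => Real.exp (M.X t ω)) ω
      ≤ {ω | min (M.exitTime (Iio c) ω) (ENNReal.ofReal t) < M.exitTime (Iio 1) ω}.indicator
          (fun ω => M.payoffAt α (fun _ y => min (Real.exp y) (Real.exp 1)) 0
            (min (M.exitTime (Iio c) ω) (ENNReal.ofReal t)) ω) ω := by
  have hlt : min (M.exitTime (Iio c) ω) (ENNReal.ofReal t) < M.exitTime (Iio 1) ω := by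
    by_cases h1 : M.exitTime (Iio 1) ω = ∞
    · exact h1 ▸ (min_le_right _ _).trans_lt ENNReal.ofReal_lt_top
    · exact (min_le_left _ _).trans_lt (exitTime_Iio_lt_exitTime_Iio hω h0 hc h1)
  rw [indicator_of_mem (s := {ω | min (M.exitTime (Iio c) ω) _ < _}) hlt]
  rcases le_or_gt (M.exitTime (Iio c) ω) (ENNReal.ofReal t) with hσt | htσ
  · obtain ⟨s, hs0, hXs, hσs⟩ :=
      exists_exitTime_eq_ofReal hω isOpen_Iio (ne_top_of_le_ne_top ENNReal.ofReal_ne_top hσt)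
    have hst : s ≤ t := (ENNReal.ofReal_le_ofReal_iff ht).1 (hσs ▸ hσt)
    have hXs : c ≤ M.X s ω := not_lt.1 hXs
    rw [min_eq_left hσt, hσs, payoffAt_ofReal _ _ _ hs0]
    calc _ ≤ Real.exp (-α * t) * Real.exp c := by
          gcongr
          by_cases hXt : M.X t ω < 1
          · simpa [hXt] using (hcX hXt).le
          · simp [hXt, Real.exp_nonneg]
      _ ≤ _ := mul_le_mul (Real.exp_le_exp.2 (by nlinarith))
          (le_min (Real.exp_le_exp.2 hXs) (Real.exp_le_exp.2 hc.le)) (Real.exp_nonneg _)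
          (Real.exp_nonneg _)
  · rw [min_eq_right htσ.le, payoffAt_ofReal _ _ _ ht]
    exact mul_le_mul_of_nonneg_left (indicator_Iio_exp_le_min 1 (M.X t ω)) (Real.exp_nonneg _)

theorem eventually_le_indicator_payoffAt_max_min_exitTime
    (hω : Continuous fun u => M.X u ω) {α t : ℝ} (hα : 0 ≤ α) (ht : 0 ≤ t) {c₀ : ℝ}
    (h0 : M.X 0 ω < c₀) {c ε : ℕ → ℝ} (hc₀ : ∀ n, c₀ ≤ c n) (hc : ∀ n, c n < 1)
    (hc1 : Tendsto c atTop (𝓝 1)) (hεt : ∀ n, ε n ≤ t) (hε0 : Tendsto ε atTop (𝓝 0)) :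
    ∀ᶠ n in atTop,
      Real.exp (-α * t) * {ω | M.X t ω < 1}.indicator (fun ω => Real.exp (M.X t ω)) ω
        ≤ {ω | max (min (M.exitTime (Iio (c n)) ω) (ENNReal.ofReal t)) (ENNReal.ofReal (ε n))
              < M.exitTime (Iio 1) ω}.indicator
            (fun ω => M.payoffAt α (fun _ y => min (Real.exp y) (Real.exp 1)) 0
              (max (min (M.exitTime (Iio (c n)) ω) (ENNReal.ofReal t)) (ENNReal.ofReal (ε n))) ω)
            ω := by
  have hε : ∀ᶠ n in atTop, ENNReal.ofReal (ε n) ≤ M.exitTime (Iio c₀) ω :=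
    ((ENNReal.tendsto_ofReal hε0).eventually
      (gt_mem_nhds (by simpa using exitTime_pos hω isOpen_Iio h0))).mono fun _ hn => hn.le
  have hcX : ∀ᶠ n in atTop, M.X t ω < 1 → M.X t ω < c n := by
    by_cases hXt : M.X t ω < 1
    · exact (hc1.eventually (lt_mem_nhds hXt)).mono fun n hn _ => hn
    · exact Eventually.of_forall fun n h => absurd h hXt
  filter_upwards [hε, hcX] with n hεn hcXn
  have hτ : max (min (M.exitTime (Iio (c n)) ω) (ENNReal.ofReal t)) (ENNReal.ofReal (ε n))
      = min (M.exitTime (Iio (c n)) ω) (ENNReal.ofReal t) :=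
    max_eq_left (le_min (hεn.trans (exitTime_mono (Iio_subset_Iio (hc₀ n))))
      (ENNReal.ofReal_le_ofReal (hεt n)))
  have := le_indicator_payoffAt_min_exitTime hω hα ht (h0.trans_le (hc₀ n)) (hc n) hcXn
  simp only [indicator_apply, mem_ofPred_eq] at this ⊢
  simpa only [hτ] using this

theorem measurable_indicator_payoffAt (hpath : ∀ ω : Ω, Continuous fun u => M.X u ω)
    (α : ℝ) {h : ℝ → ℝ → ℝ} (hh : Measurable (Function.uncurry h)) (s c : ℝ)
    {τ : Ω → ℝ≥0∞} (hτ : Measurable τ) :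
    Measurable fun ω =>
      {ω | τ ω < M.exitTime (Iio c) ω}.indicator (fun ω => M.payoffAt α h s (τ ω) ω) ω := by
  refine Measurable.indicator ?_ (measurableSet_lt hτ (measurable_exitTime_Iio hpath c))
  have hr : Measurable fun ω => (τ ω).toReal := ENNReal.measurable_toReal.comp hτ
  have hX := measurable_X_comp hpath hr
  refine Measurable.ite (measurableSet_eq_fun hτ measurable_const).compl ?_ measurable_const
  exact (Real.measurable_exp.comp (hr.const_mul (-α))).mul
    (hh.comp ((hr.const_add s).prodMk hX))

theorem abs_exp_mul_indicator_Iio_exp_le {α t : ℝ} (hα : 0 ≤ α) (ht : 0 ≤ t) (y : ℝ) :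
    |Real.exp (-α * t) * (Iio 1).indicator Real.exp y| ≤ Real.exp 1 := by
  have hind : 0 ≤ (Iio 1).indicator Real.exp y := indicator_nonneg (fun _ _ => Real.exp_nonneg _) _
  rw [abs_of_nonneg (mul_nonneg (Real.exp_nonneg _) hind)]
  exact (mul_le_of_le_one_left hind (Real.exp_le_one_iff.2 (by nlinarith))).trans
    ((indicator_Iio_exp_le_min 1 y).trans (min_le_right _ _))

theorem integral_exp_mul_indicator_le_value_of_tendsto
    (hpath : ∀ ω : Ω, Continuous fun u => M.X u ω) {α : ℝ} (hα : 0 ≤ α) {x t c₀ : ℝ}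
    (ht : 0 < t) (hx : x < c₀) {c ε : ℕ → ℝ} (hc₀ : ∀ n, c₀ ≤ c n) (hc : ∀ n, c n < 1)
    (hc1 : Tendsto c atTop (𝓝 1)) (hε : ∀ n, 0 < ε n) (hεt : ∀ n, ε n ≤ t)
    (hε0 : Tendsto ε atTop (𝓝 0)) :
    ∫ ω, Real.exp (-α * t) * {ω | M.X t ω < 1}.indicator (fun ω => Real.exp (M.X t ω)) ω ∂M.P x
      ≤ M.value (Iio 1) α (fun _ _ => 0) (fun _ y => min (Real.exp y) (Real.exp 1))
          (fun _ _ => 0) 0 x := by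
  have := M.isProb x
  have hG : ∀ (s y : ℝ), |min (Real.exp y) (Real.exp 1)| ≤ Real.exp 1 := fun _ y =>
    (abs_of_nonneg (le_min (Real.exp_nonneg _) (Real.exp_nonneg _))).trans_le (min_le_right _ _)
  -- the offset `ε n > 0` is needed since `{τ ≤ s}` must lie in `natFiltration s` also for `s < 0`
  set τ : ℕ → Ω → ℝ≥0∞ := fun n ω =>
    max (min (M.exitTime (Iio (c n)) ω) (ENNReal.ofReal t)) (ENNReal.ofReal (ε n))
  refine integral_le_of_ae_eventually_le (C := Real.exp 1)
    (f := fun n ω => {ω | τ n ω < M.exitTime (Iio 1) ω}.indicator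
      (fun ω => M.payoffAt α (fun _ y => min (Real.exp y) (Real.exp 1)) 0 (τ n ω) ω) ω)
    (fun n => ?_) ?_
    (fun n => ae_of_all _ fun ω =>
      (norm_indicator_le_norm_self _ _).trans (abs_payoffAt_le hα hG _ _ _))
    (ae_of_all _ fun ω => abs_exp_mul_indicator_Iio_exp_le hα ht.le (M.X t ω)) ?_ (fun n => ?_)
  · exact (measurable_indicator_payoffAt hpath α (by fun_prop) 0 1
      (((measurable_exitTime_Iio hpath _).min measurable_const).max
        measurable_const)).aestronglyMeasurable
  · exact (measurable_const.mul ((Real.measurable_exp.comp (M.meas_X t)).indicator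
      (measurableSet_lt (M.meas_X t) measurable_const))).aestronglyMeasurable
  · filter_upwards [M.start x] with ω hω
    exact eventually_le_indicator_payoffAt_max_min_exitTime (hpath ω) hα ht.le (hω ▸ hx) hc₀ hc
      hc1 hεt hε0
  · rw [← J_zero_zero]
    exact J_zero_zero_le_value hα hG 0 x
      (isStopTime_max_min (fun _ => measurableSet_exitTime_Iio_le hpath _) _ (hε n))

theorem integral_exp_mul_indicator_le_value (hpath : ∀ ω : Ω, Continuous fun u => M.X u ω)
    {α : ℝ} (hα : 0 ≤ α) {x t : ℝ} (hx : x < 1) (ht : 0 < t) :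
    ∫ ω, Real.exp (-α * t) * {ω | M.X t ω < 1}.indicator (fun ω => Real.exp (M.X t ω)) ω ∂M.P x
      ≤ M.value (Iio 1) α (fun _ _ => 0) (fun _ y => min (Real.exp y) (Real.exp 1))
          (fun _ _ => 0) 0 x := by
  have hδ0 : Tendsto (fun n : ℕ => 1 / ((n : ℝ) + 1)) atTop (𝓝 0) :=
    tendsto_one_div_add_atTop_nhds_zero_nat
  have hδ (n : ℕ) : 0 < 1 / ((n : ℝ) + 1) ∧ 1 / ((n : ℝ) + 1) ≤ 1 :=
    ⟨by positivity, div_le_one_of_le₀ (by simp) (by positivity)⟩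
  refine integral_exp_mul_indicator_le_value_of_tendsto hpath hα ht (c₀ := (1 + x) / 2)
    (c := fun n => 1 - (1 - x) / 2 * (1 / (n + 1))) (ε := fun n => t * (1 / (n + 1)))
    (by linarith) (fun n => ?_) (fun n => ?_) ?_ (fun n => mul_pos ht (hδ n).1)
    (fun n => mul_le_of_le_one_right ht.le (hδ n).2) ?_
  · nlinarith [hδ n]
  · nlinarith [hδ n]
  · simpa using (hδ0.const_mul ((1 - x) / 2)).const_sub 1
  · simpa using hδ0.const_mul t

theorem integral_exp_mul_indicator_eq {x t : ℝ}
    (hX : (M.P x).map (M.X t) = gaussianReal x t.toNNReal) (ht : 0 < t) (α : ℝ) :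
    ∫ ω, Real.exp (-α * t) * {ω | M.X t ω < 1}.indicator (fun ω => Real.exp (M.X t ω)) ω ∂M.P x
      = Real.exp ((1 / 2 - α) * t + x) * cdf (gaussianReal 0 1) ((1 - x - t) / √t) := by
  have hv : t.toNNReal ≠ 0 := by simpa using ht
  have hmap : ∫ ω, {ω | M.X t ω < 1}.indicator (fun ω => Real.exp (M.X t ω)) ω ∂M.P x
      = ∫ y, (Iio 1).indicator Real.exp y ∂(M.P x).map (M.X t) :=
    (integral_map (M.meas_X t).aemeasurable
      (Real.measurable_exp.indicator measurableSet_Iio).aestronglyMeasurable).symm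
  rw [integral_const_mul, hmap, hX, integral_indicator_Iio_exp_gaussianReal x hv,
    Real.coe_toNNReal t ht.le, ← mul_assoc, ← Real.exp_add]
  ring_nf

end RealPaths

theorem stmt16_general {Ω : Type} [MeasurableSpace Ω] (M : MarkovProcess ℝ Ω)
    (hpath : ∀ ω : Ω, Continuous fun t => M.X t ω)
    (hgauss : ∀ (x : ℝ) (t : ℝ), 0 < t →
      Measure.map (M.X t) (M.P x) = ProbabilityTheory.gaussianReal x (Real.toNNReal t))
    (α : ℝ) (hα0 : 0 < α) (hα : α < 1 / 2) :
    (∀ x : ℝ, x < 1 → ∀ t : ℝ, 0 < t →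
      ∫ ω, Real.exp (-α * t) *
          Set.indicator {ω | M.X t ω < 1} (fun ω => Real.exp (M.X t ω)) ω ∂ M.P x
        = Real.exp ((1 / 2 - α) * t + x) *
            ProbabilityTheory.cdf (ProbabilityTheory.gaussianReal 0 1)
              ((1 - x - t) / Real.sqrt t))
    ∧ (∀ x : ℝ, x < 1 → ∀ t : ℝ, 0 < t →
        M.value (Set.Iio 1) α (fun _ _ => 0) (fun _ y => min (Real.exp y) (Real.exp 1))
            (fun _ _ => 0) 0 x
          ≥ Real.exp ((1 / 2 - α) * t + x) *
              ProbabilityTheory.cdf (ProbabilityTheory.gaussianReal 0 1)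
                ((1 - x - t) / Real.sqrt t))
    ∧ (∀ x : ℝ, x < 1 →
        M.value (Set.Iio 1) α (fun _ _ => 0) (fun _ y => min (Real.exp y) (Real.exp 1))
            (fun _ _ => 0) 0 x > Real.exp x) := by
  have hformula : ∀ x : ℝ, x < 1 → ∀ t : ℝ, 0 < t → _ :=
    fun x _ t ht => integral_exp_mul_indicator_eq (hgauss x t ht) ht α
  have hbound : ∀ x : ℝ, x < 1 → ∀ t : ℝ, 0 < t → _ :=
    fun x hx t ht => (hformula x hx t ht).symm.trans_le
      (integral_exp_mul_indicator_le_value hpath hα0.le hx ht)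
  refine ⟨hformula, hbound, fun x hx => ?_⟩
  obtain ⟨t, ht, hlt⟩ :=
    exists_one_lt_exp_mul_cdf_gaussianReal (c := 1 / 2 - α) (d := 1 - x) (by linarith)
      (by linarith)
  calc Real.exp x < Real.exp x * (Real.exp ((1 / 2 - α) * t) *
        cdf (gaussianReal 0 1) ((1 - x - t) / √t)) := lt_mul_of_one_lt_right (Real.exp_pos x) hlt
    _ = _ := by rw [Real.exp_add]; ring
    _ ≤ _ := hbound x hx t ht

/-- the Brownian-motion example with `O = (-∞,1)`, `G(x) = min(eˣ, e)`,
`H = f = 0` and `0 < α < 1/2`: the explicit formula for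
`E^x[e^{-αt} 1_{X(t)<1} e^{X(t)}]`, the resulting lower bound for `w`, and `w > G`
on `(-∞,1)`. -/
theorem stmt16 {Ω : Type} [MeasurableSpace Ω] (M : MarkovProcess ℝ Ω)
    (hM : M.IsMarkov)
    (hpath : ∀ ω : Ω, Continuous fun t => M.X t ω)
    (hgauss : ∀ (x : ℝ) (t : ℝ), 0 < t →
      Measure.map (M.X t) (M.P x) = ProbabilityTheory.gaussianReal x (Real.toNNReal t))
    (α : ℝ) (hα0 : 0 < α) (hα : α < 1 / 2) :
    (∀ x : ℝ, x < 1 → ∀ t : ℝ, 0 < t →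
      ∫ ω, Real.exp (-α * t) *
          Set.indicator {ω | M.X t ω < 1} (fun ω => Real.exp (M.X t ω)) ω ∂ M.P x
        = Real.exp ((1 / 2 - α) * t + x) *
            ProbabilityTheory.cdf (ProbabilityTheory.gaussianReal 0 1)
              ((1 - x - t) / Real.sqrt t))
    ∧ (∀ x : ℝ, x < 1 → ∀ t : ℝ, 0 < t →
        M.value (Set.Iio 1) α (fun _ _ => 0) (fun _ y => min (Real.exp y) (Real.exp 1))
            (fun _ _ => 0) 0 x
          ≥ Real.exp ((1 / 2 - α) * t + x) *
              ProbabilityTheory.cdf (ProbabilityTheory.gaussianReal 0 1)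
                ((1 - x - t) / Real.sqrt t))
    ∧ (∀ x : ℝ, x < 1 →
        M.value (Set.Iio 1) α (fun _ _ => 0) (fun _ y => min (Real.exp y) (Real.exp 1))
            (fun _ _ => 0) 0 x > Real.exp x) :=
  stmt16_general M hpath hgauss α hα0 hα

end MarkovProcess
end
end

section
/- Under the strong Feller property (A3), if F : [0,∞)×E → ℝ is bounded measurable and s ↦ F(s,x) is continuous uniformly in x from compact subsets of E, then for every h > 0 the map (s,x) ↦ E^x[F(s+h, X(h))] is continuous on [0,∞)×E. -/
open MeasureTheory Set Filter Topology ENNReal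

noncomputable section

/-!
Write `Φ(s, x) = E^x[F(s + h, X(h))]`. By the strong Feller property each `Φ(s, ·)` is
continuous, so it suffices that `Φ(s, ·) → Φ(s₀, ·)` uniformly on a compact neighbourhood `K`
of `x₀` as `s → s₀`. Compact containment gives one compact `L` carrying all the laws of `X(h)`
under `P^x`, `x ∈ K`, up to mass `ε`; on `L` the integrands converge uniformly, and off `L`
they are bounded, which costs at most `2 C ε`.
-/

theorem continuousWithinAt_uncurry_of_tendstoUniformlyOn {α β γ : Type*} [TopologicalSpace α]
    [TopologicalSpace β] [UniformSpace γ] {f : α → β → γ} {s : Set α} {a : α} {b : β}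
    {K : Set β} (hK : K ∈ 𝓝 b) (hf : TendstoUniformlyOn f (f a) (𝓝[s] a) K)
    (hfa : ContinuousAt (f a) b) :
    ContinuousWithinAt (Function.uncurry f) (s ×ˢ univ) (a, b) := by
  have hfst : Tendsto Prod.fst (𝓝[s ×ˢ univ] (a, b)) (𝓝[s] a) :=
    continuousWithinAt_fst.tendsto_nhdsWithin fun _ hp => hp.1
  have hsnd : Tendsto Prod.snd (𝓝[s ×ˢ univ] (a, b)) (𝓝 b) :=
    continuousWithinAt_snd.tendsto
  exact tendsto_comp_of_locally_uniform_limit (F := fun p : α × β => f p.1) hfa hsnd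
    fun u hu => ⟨K, hK, hfst (hf u hu)⟩

section Integral

variable {Ω : Type*} [MeasurableSpace Ω]

theorem abs_integral_sub_le_of_abs_sub_le_off {μ : Measure Ω} [IsProbabilityMeasure μ]
    {f g : Ω → ℝ} {S : Set Ω} {η D : ℝ} (hf : Integrable f μ) (hg : Integrable g μ)
    (hS : MeasurableSet S) (hη : 0 ≤ η) (hoff : ∀ ω ∉ S, |f ω - g ω| ≤ η)
    (hD : ∀ ω, |f ω - g ω| ≤ D) :
    |∫ ω, f ω ∂μ - ∫ ω, g ω ∂μ| ≤ η + D * μ.real S := by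
  have hpt : ∀ ω, |f ω - g ω| ≤ η + S.indicator (fun _ => D) ω := by
    intro ω
    by_cases hω : ω ∈ S
    · rw [indicator_of_mem hω]
      linarith [hD ω]
    · rw [indicator_of_notMem hω, add_zero]
      exact hoff ω hω
  rw [← integral_sub hf hg]
  calc |∫ ω, (f ω - g ω) ∂μ| ≤ ∫ ω, |f ω - g ω| ∂μ := abs_integral_le_integral_abs
    _ ≤ ∫ ω, (η + S.indicator (fun _ => D) ω) ∂μ :=
        integral_mono (hf.sub hg).abs
          ((integrable_const η).add ((integrable_const D).indicator hS)) hpt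
    _ = η + D * μ.real S := by
        rw [integral_add (integrable_const η) ((integrable_const D).indicator hS),
          integral_const, integral_indicator_const D hS]
        simp [mul_comm]

theorem tendstoUniformlyOn_integral_comp_of_tight {E ι α : Type*} [TopologicalSpace E]
    [T2Space E] [MeasurableSpace E] [OpensMeasurableSpace E] {μ : ι → Measure Ω}
    [∀ i, IsProbabilityMeasure (μ i)] {Y : Ω → E} (hY : Measurable Y) {K : Set ι}
    (htight : ∀ ε : ℝ, 0 < ε →
      ∃ L : Set E, IsCompact L ∧ ∀ i ∈ K, (μ i {ω | Y ω ∉ L}).toReal < ε)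
    {G : α → E → ℝ} {g : E → ℝ} {l : Filter α} {C : ℝ}
    (hGm : ∀ a, Measurable (G a)) (hgm : Measurable g)
    (hGb : ∀ᶠ a in l, ∀ y, |G a y| ≤ C) (hgb : ∀ y, |g y| ≤ C)
    (hG : ∀ L : Set E, IsCompact L → TendstoUniformlyOn G g l L) :
    TendstoUniformlyOn (fun a i => ∫ ω, G a (Y ω) ∂μ i) (fun i => ∫ ω, g (Y ω) ∂μ i) l K := by
  have hint : ∀ {φ : E → ℝ}, Measurable φ → (∀ y, |φ y| ≤ C) → ∀ i,
      Integrable (fun ω => φ (Y ω)) (μ i) := fun hφ hφC i =>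
    (integrable_const C).mono' (hφ.comp hY).aestronglyMeasurable
      (Eventually.of_forall fun ω => hφC (Y ω))
  rw [Metric.tendstoUniformlyOn_iff]
  intro ε hε
  set D := 2 * |C|
  obtain ⟨L, hL, hLμ⟩ := htight (ε / 2 / (D + 1)) (by positivity)
  have hclose := Metric.tendstoUniformlyOn_iff.mp (hG L hL) (ε / 2) (half_pos hε)
  filter_upwards [hGb, hclose] with a haC haL i hi
  have hS : MeasurableSet {ω | Y ω ∉ L} := hY hL.isClosed.measurableSet.compl
  have hSμ : (μ i).real {ω | Y ω ∉ L} < ε / 2 / (D + 1) := hLμ i hi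
  have hest := abs_integral_sub_le_of_abs_sub_le_off (μ := μ i) (D := D) (hint hgm hgb i)
    (hint (hGm a) haC i) hS (half_pos hε).le
    (fun ω hω => by
      rw [← Real.dist_eq]
      exact (haL (Y ω) (not_not.mp hω)).le)
    (fun ω => by
      have := abs_sub (g (Y ω)) (G a (Y ω))
      linarith [hgb (Y ω), haC (Y ω), le_abs_self C])
  have hDμ : D * (μ i).real {ω | Y ω ∉ L} < ε / 2 := by
    have hD : 0 ≤ D := by positivity
    calc D * (μ i).real {ω | Y ω ∉ L} ≤ (D + 1) * (μ i).real {ω | Y ω ∉ L} := by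
          nlinarith [measureReal_nonneg (μ := μ i) (s := {ω | Y ω ∉ L})]
      _ < (D + 1) * (ε / 2 / (D + 1)) := by gcongr
      _ = ε / 2 := by field_simp
  rw [Real.dist_eq]
  linarith

end Integral

namespace MarkovProcess

theorem stmt18_general {E : Type} [MeasurableSpace E] [MetricSpace E] [BorelSpace E]
    [ProperSpace E]
    {Ω : Type} [MeasurableSpace Ω] (M : MarkovProcess E Ω)
    (hSF : M.StrongFeller)
    (hCC : ∀ K : Set E, IsCompact K → ∀ h : ℝ, 0 < h → ∀ ε : ℝ, 0 < ε →
      ∃ L : Set E, IsCompact L ∧ ∀ x ∈ K, (M.P x {ω | M.X h ω ∉ L}).toReal < ε)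
    (F : ℝ → E → ℝ) (hFm : Measurable (Function.uncurry F)) (hFb : Bdd F)
    (hFcont : ∀ K : Set E, IsCompact K → ∀ s₀ : ℝ, 0 ≤ s₀ →
      TendstoUniformlyOn (fun s x => F s x) (fun x => F s₀ x) (𝓝[Set.Ici 0] s₀) K) :
    ∀ h : ℝ, 0 < h →
      ContinuousOn (fun p : ℝ × E => ∫ ω, F (p.1 + h) (M.X h ω) ∂ M.P p.2)
        (Set.Ici 0 ×ˢ Set.univ) := by
  intro h hh
  rintro ⟨s₀, x₀⟩ ⟨hs₀ : 0 ≤ s₀, -⟩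
  obtain ⟨C, hC⟩ := hFb
  have := M.isProb
  have hshift : Tendsto (· + h) (𝓝[Ici 0] s₀) (𝓝[Ici 0] (s₀ + h)) :=
    (continuous_add_const h).continuousWithinAt.tendsto_nhdsWithin
      fun s (hs : 0 ≤ s) => (by simp only [mem_Ici]; linarith : s + h ∈ Ici 0)
  have hbound : ∀ᶠ s in 𝓝[Ici 0] s₀, ∀ y, |F (s + h) y| ≤ C :=
    eventually_nhdsWithin_of_forall fun s (hs : 0 ≤ s) y => hC _ y (by linarith)
  have hFs : ∀ s, Measurable (F s) := fun _ => hFm.of_uncurry_left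
  have hFshift : ∀ L, IsCompact L →
      TendstoUniformlyOn (fun s => F (s + h)) (F (s₀ + h)) (𝓝[Ici 0] s₀) L :=
    fun L hL u hu => hshift (hFcont L hL (s₀ + h) (by linarith) u hu)
  refine continuousWithinAt_uncurry_of_tendstoUniformlyOn
    (f := fun s x => ∫ ω, F (s + h) (M.X h ω) ∂ M.P x)
    (Metric.closedBall_mem_nhds x₀ one_pos) ?_ ?_
  · exact tendstoUniformlyOn_integral_comp_of_tight (M.meas_X h)
      (hCC _ (isCompact_closedBall x₀ 1) h hh) (fun s => hFs (s + h)) (hFs (s₀ + h)) hbound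
      (fun y => hC _ y (by linarith)) hFshift
  · exact (hSF h hh _ (hFs (s₀ + h)) ⟨C, fun y => hC _ y (by linarith)⟩).continuousAt

/-- under the strong Feller property (A3) and compact containment, if
`s ↦ F(s,x)` is continuous uniformly in `x` from compacts, then for each `h > 0`
the map `(s,x) ↦ E^x[F(s+h,X(h))]` is continuous on `[0,∞) × E`. -/
theorem stmt18 {E : Type} [MeasurableSpace E] [MetricSpace E] [BorelSpace E]
    [ProperSpace E] [SecondCountableTopology E]
    {Ω : Type} [MeasurableSpace Ω] (M : MarkovProcess E Ω)
    (hSF : M.StrongFeller)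
    (hCC : ∀ K : Set E, IsCompact K → ∀ h : ℝ, 0 < h → ∀ ε : ℝ, 0 < ε →
      ∃ L : Set E, IsCompact L ∧ ∀ x ∈ K, (M.P x {ω | M.X h ω ∉ L}).toReal < ε)
    (F : ℝ → E → ℝ) (hFm : Measurable (Function.uncurry F)) (hFb : Bdd F)
    (hFcont : ∀ K : Set E, IsCompact K → ∀ s₀ : ℝ, 0 ≤ s₀ →
      TendstoUniformlyOn (fun s x => F s x) (fun x => F s₀ x) (𝓝[Set.Ici 0] s₀) K) :
    ∀ h : ℝ, 0 < h →
      ContinuousOn (fun p : ℝ × E => ∫ ω, F (p.1 + h) (M.X h ω) ∂ M.P p.2)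
        (Set.Ici 0 ×ˢ Set.univ) :=
  stmt18_general M hSF hCC F hFm hFb hFcont

end MarkovProcess
end
end
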